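/- arXiv:1303.1060 — 2 statements merged into one kernel-verified Lean document; each statement's English description precedes it below -/
import Mathlib

section
/- For every r > 0 the derivatives λ_e'(r) and H_ε'(r) exist and satisfy 0 ≤ H_ε'(r) − λ_e'(r) ≤ 2·T·r / (u(r)²·λ_e(r)), where u(r) = (1−ε)+(T−ε)r². In particular the function r ↦ λ_e(r) − H_ε(r) is nonincreasing on [0,∞). -/
/-! Write `u = uu`, `v = vv = √(u² + 4ε)`. Then `ε λ_e² = ((1+ε) + (T+ε)r² + v)/2` and
`ε H_ε² = 1 + Tr²`, so `2ε(λ_e² − H_ε²) = v − u ≥ 0`, while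
`λ_e' = r((T+ε)v + (T−ε)u)/(2ε v λ_e)` and `H_ε' = Tr/(ε H_ε)`. As `(T+ε)v + (T−ε)u ≤ 2Tv` and
`H_ε ≤ λ_e`, this gives `λ_e' ≤ H_ε'`. After clearing denominators the gap `H_ε' − λ_e'` becomes
`2Tvu²(λ_e − H_ε) + (T−ε)(v−u) H_ε u²`, and both terms are `O(ε)` because `u(v − u) ≤ 2ε`,
which is `(v − u)² ≥ 0` in disguise. -/

open Real

/-- `u(r) = (1-ε)+(T-ε)r²`. -/
noncomputable def uu (ε T r : ℝ) : ℝ := (1 - ε) + (T - ε) * r ^ 2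

/-- The ion dispersion relation `λ_i`. -/
noncomputable def lamI (ε T r : ℝ) : ℝ :=
  (Real.sqrt ε)⁻¹ *
    Real.sqrt (((1 + ε) + (T + ε) * r ^ 2 - Real.sqrt ((uu ε T r) ^ 2 + 4 * ε)) / 2)

/-- The electron dispersion relation `λ_e`. -/
noncomputable def lamE (ε T r : ℝ) : ℝ :=
  (Real.sqrt ε)⁻¹ *
    Real.sqrt (((1 + ε) + (T + ε) * r ^ 2 + Real.sqrt ((uu ε T r) ^ 2 + 4 * ε)) / 2)

/-- `H₁(r) = √(1+r²)`. -/
noncomputable def H1 (r : ℝ) : ℝ := Real.sqrt (1 + r ^ 2)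

/-- `H_ε(r) = ε^{-1/2}√(1+Tr²)`. -/
noncomputable def Heps (ε T r : ℝ) : ℝ := (Real.sqrt ε)⁻¹ * Real.sqrt (1 + T * r ^ 2)

noncomputable def vv (ε T r : ℝ) : ℝ := Real.sqrt (uu ε T r ^ 2 + 4 * ε)

section Dispersion

variable {ε T : ℝ}

lemma sq_vv (hε : 0 ≤ ε) (r : ℝ) : vv ε T r ^ 2 = uu ε T r ^ 2 + 4 * ε :=
  Real.sq_sqrt (by positivity)

lemma uu_le_vv (hε : 0 ≤ ε) (r : ℝ) : uu ε T r ≤ vv ε T r :=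
  Real.le_sqrt_of_sq_le (by linarith)

lemma uu_mul_vv_sub_uu_le (hε : 0 ≤ ε) (r : ℝ) : uu ε T r * (vv ε T r - uu ε T r) ≤ 2 * ε := by
  nlinarith [sq_vv (T := T) hε r, sq_nonneg (vv ε T r - uu ε T r)]

lemma uu_pos (hε1 : ε < 1) (hεT : ε ≤ T) (r : ℝ) : 0 < uu ε T r := by
  unfold uu; nlinarith [sq_nonneg r]

lemma mul_sq_lamE (hε : 0 < ε) (hT : 0 ≤ T) (r : ℝ) :
    ε * lamE ε T r ^ 2 = ((1 + ε) + (T + ε) * r ^ 2 + vv ε T r) / 2 := by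
  have : 0 ≤ vv ε T r := Real.sqrt_nonneg _
  rw [lamE, ← vv, mul_pow, inv_pow, Real.sq_sqrt hε.le, Real.sq_sqrt (by positivity)]
  field_simp

lemma mul_sq_Heps (hε : 0 < ε) (hT : 0 ≤ T) (r : ℝ) : ε * Heps ε T r ^ 2 = 1 + T * r ^ 2 := by
  rw [Heps, mul_pow, inv_pow, Real.sq_sqrt hε.le, Real.sq_sqrt (by positivity)]
  field_simp

lemma Heps_pos (hε : 0 < ε) (hT : 0 ≤ T) (r : ℝ) : 0 < Heps ε T r := by
  unfold Heps; positivity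

lemma Heps_le_lamE (hε : 0 < ε) (r : ℝ) : Heps ε T r ≤ lamE ε T r := by
  have huv := uu_le_vv (T := T) hε.le r
  rw [Heps, lamE, ← vv]
  gcongr
  unfold uu at huv
  nlinarith [sq_nonneg r]

lemma two_mul_mul_sq_lamE_sub_sq_Heps (hε : 0 < ε) (hT : 0 ≤ T) (r : ℝ) :
    2 * ε * (lamE ε T r ^ 2 - Heps ε T r ^ 2) = vv ε T r - uu ε T r := by
  rw [uu]
  linear_combination 2 * mul_sq_lamE hε hT r - 2 * mul_sq_Heps hε hT r

lemma hasDerivAt_Heps (hε : 0 < ε) (hT : 0 ≤ T) (r : ℝ) :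
    HasDerivAt (Heps ε T) (T * r / (ε * Heps ε T r)) r := by
  have hP : 0 < 1 + T * r ^ 2 := by positivity
  refine ((((hasDerivAt_pow 2 r).const_mul T).const_add 1).sqrt hP.ne').const_mul
    (Real.sqrt ε)⁻¹ |>.congr_deriv ?_
  have hs : 0 < Real.sqrt ε := Real.sqrt_pos.mpr hε
  rw [Heps, ← Real.sq_sqrt hε.le]
  field_simp
  norm_num

lemma hasDerivAt_uu (r : ℝ) : HasDerivAt (uu ε T) (2 * (T - ε) * r) r :=
  ((hasDerivAt_pow 2 r).const_mul (T - ε)).const_add (1 - ε) |>.congr_deriv (by ring)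

lemma hasDerivAt_vv (hε : 0 < ε) (r : ℝ) :
    HasDerivAt (vv ε T) (2 * (T - ε) * r * uu ε T r / vv ε T r) r := by
  have : 0 < uu ε T r ^ 2 + 4 * ε := by positivity
  refine (((hasDerivAt_uu r).pow 2).add_const (4 * ε)).sqrt this.ne' |>.congr_deriv ?_
  simp only [vv, Pi.pow_apply]
  field_simp
  norm_num
  ring

lemma hasDerivAt_lamE (hε : 0 < ε) (hT : 0 ≤ T) (r : ℝ) :
    HasDerivAt (lamE ε T)
      (r * ((T + ε) * vv ε T r + (T - ε) * uu ε T r) / (2 * ε * vv ε T r * lamE ε T r)) r := by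
  have hv : 0 < vv ε T r := Real.sqrt_pos.mpr (by positivity)
  have hA : 0 < ((1 + ε) + (T + ε) * r ^ 2 + vv ε T r) / 2 := by positivity
  have hdA : HasDerivAt (fun s => ((1 + ε) + (T + ε) * s ^ 2 + vv ε T s) / 2)
      (r * ((T + ε) * vv ε T r + (T - ε) * uu ε T r) / vv ε T r) r := by
    refine ((((hasDerivAt_pow 2 r).const_mul (T + ε)).const_add (1 + ε)).add
      (hasDerivAt_vv hε r)).div_const 2 |>.congr_deriv ?_
    field_simp
    ring
  refine (hdA.sqrt hA.ne').const_mul (Real.sqrt ε)⁻¹ |>.congr_deriv ?_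
  rw [lamE, ← vv]
  have hs : 0 < Real.sqrt ε := Real.sqrt_pos.mpr hε
  have ha : 0 < Real.sqrt (((1 + ε) + (T + ε) * r ^ 2 + vv ε T r) / 2) := Real.sqrt_pos.mpr hA
  field_simp
  rw [Real.sq_sqrt hε.le]
  ring

lemma lamE_deriv_le_Heps_deriv (hε : 0 < ε) (hεT : ε ≤ T) {r : ℝ} (hr : 0 ≤ r) :
    r * ((T + ε) * vv ε T r + (T - ε) * uu ε T r) / (2 * ε * vv ε T r * lamE ε T r) ≤
      T * r / (ε * Heps ε T r) := by
  have hT : 0 ≤ T := hε.le.trans hεT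
  have hv : 0 < vv ε T r := Real.sqrt_pos.mpr (by positivity)
  have hy := Heps_pos hε hT r
  have hx := hy.trans_le (Heps_le_lamE (T := T) hε r)
  have hK : (T + ε) * vv ε T r + (T - ε) * uu ε T r ≤ 2 * T * vv ε T r := by
    nlinarith [uu_le_vv (T := T) hε.le r]
  calc r * ((T + ε) * vv ε T r + (T - ε) * uu ε T r) / (2 * ε * vv ε T r * lamE ε T r)
      ≤ r * (2 * T * vv ε T r) / (2 * ε * vv ε T r * lamE ε T r) := by gcongr
    _ = T * r / (ε * lamE ε T r) := by field_simp
    _ ≤ T * r / (ε * Heps ε T r) := by gcongr; exact Heps_le_lamE hε r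

lemma Heps_deriv_sub_lamE_deriv_le (hε : 0 < ε) (hε1 : ε < 1) (hεT : ε ≤ T) {r : ℝ}
    (hr : 0 ≤ r) :
    T * r / (ε * Heps ε T r) -
        r * ((T + ε) * vv ε T r + (T - ε) * uu ε T r) / (2 * ε * vv ε T r * lamE ε T r) ≤
      2 * T * r / (uu ε T r ^ 2 * lamE ε T r) := by
  have hT : 0 ≤ T := hε.le.trans hεT
  have hxy := two_mul_mul_sq_lamE_sub_sq_Heps hε hT r
  have hyu : uu ε T r ≤ ε * Heps ε T r ^ 2 := by
    rw [mul_sq_Heps hε hT r, uu]; nlinarith [sq_nonneg r]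
  have hvu := uu_mul_vv_sub_uu_le (T := T) hε.le r
  have huv := uu_le_vv (T := T) hε.le r
  have hyx := Heps_le_lamE (T := T) hε r
  have hu := uu_pos hε1 hεT r
  have hy := Heps_pos hε hT r
  set u := uu ε T r
  set v := vv ε T r
  set x := lamE ε T r
  set y := Heps ε T r
  have hv : 0 < v := hu.trans_le huv
  have hx : 0 < x := hy.trans_le hyx
  have hcore : 2 * T * v * x * u ^ 2 - ((T + ε) * v + (T - ε) * u) * y * u ^ 2 ≤
      4 * T * ε * v * y := by
    have hgap : 4 * ε * y * (x - y) ≤ v - u := by nlinarith [sq_nonneg (x - y)]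
    have hgrowth : 2 * T * v * u ^ 2 * (x - y) ≤ T * ε * v * y := by
      refine le_of_mul_le_mul_left ?_ (by positivity : 0 < 4 * ε * y)
      calc 4 * ε * y * (2 * T * v * u ^ 2 * (x - y))
          = 2 * T * v * u ^ 2 * (4 * ε * y * (x - y)) := by ring
        _ ≤ 2 * T * v * u ^ 2 * (v - u) := by gcongr
        _ = 2 * T * v * u * (u * (v - u)) := by ring
        _ ≤ 2 * T * v * u * (2 * ε) := by gcongr
        _ = 4 * T * ε * v * u := by ring
        _ ≤ 4 * T * ε * v * (ε * y ^ 2) := by gcongr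
        _ = 4 * ε * y * (T * ε * v * y) := by ring
    have hsplit : (T - ε) * (v - u) * y * u ^ 2 ≤ 2 * T * ε * v * y := by
      calc (T - ε) * (v - u) * y * u ^ 2 = (T - ε) * y * u * (u * (v - u)) := by ring
        _ ≤ (T - ε) * y * u * (2 * ε) := by gcongr
        _ ≤ T * y * v * (2 * ε) := by gcongr; linarith
        _ = 2 * T * ε * v * y := by ring
    nlinarith [mul_pos (mul_pos hε hv) hy]
  rw [div_sub_div _ _ (by positivity) (by positivity),
    div_le_div_iff₀ (by positivity) (by positivity)]
  nlinarith [mul_le_mul_of_nonneg_left hcore (by positivity : 0 ≤ ε * r * x)]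

lemma antitoneOn_lamE_sub_Heps (hε : 0 < ε) (hεT : ε ≤ T) :
    AntitoneOn (fun s => lamE ε T s - Heps ε T s) (Set.Ici 0) := by
  have hT : 0 ≤ T := hε.le.trans hεT
  have hderiv (r : ℝ) := (hasDerivAt_lamE hε hT r).sub (hasDerivAt_Heps hε hT r)
  refine antitoneOn_of_hasDerivWithinAt_nonpos (convex_Ici 0)
    (fun r _ => (hderiv r).continuousAt.continuousWithinAt)
    (fun r _ => (hderiv r).hasDerivWithinAt) fun r hr => ?_
  rw [interior_Ici] at hr
  exact sub_nonpos.mpr (lamE_deriv_le_Heps_deriv hε hεT (le_of_lt hr))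

end Dispersion

theorem stmt9_general (ε T : ℝ) (hε : 0 < ε) (hε' : ε ≤ 1 / 1000) (hT : 1 ≤ T) :
    (∀ r : ℝ, 0 < r → ∃ de dh : ℝ,
      HasDerivAt (fun s => lamE ε T s) de r ∧ HasDerivAt (fun s => Heps ε T s) dh r ∧
      0 ≤ dh - de ∧ dh - de ≤ 2 * T * r / ((uu ε T r) ^ 2 * lamE ε T r)) ∧
    AntitoneOn (fun s => lamE ε T s - Heps ε T s) (Set.Ici 0) := by
  have hε1 : ε < 1 := by linarith
  have hεT : ε ≤ T := by linarith
  have hT0 : 0 ≤ T := by linarith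
  refine ⟨fun r hr => ⟨_, _, hasDerivAt_lamE hε hT0 r, hasDerivAt_Heps hε hT0 r, ?_, ?_⟩,
    antitoneOn_lamE_sub_Heps hε hεT⟩
  · exact sub_nonneg.mpr (lamE_deriv_le_Heps_deriv hε hεT hr.le)
  · exact Heps_deriv_sub_lamE_deriv_le hε hε1 hεT hr.le

/-- For every `r > 0` the derivatives `λ_e'(r)` and `H_ε'(r)` exist and satisfy
`0 ≤ H_ε'(r) − λ_e'(r) ≤ 2Tr/(u(r)²λ_e(r))`; in particular `r ↦ λ_e(r) − H_ε(r)` is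
nonincreasing on `[0,∞)`. -/
theorem stmt9 (ε T : ℝ) (hε : 0 < ε) (hε' : ε ≤ 1 / 1000) (hT : 1 ≤ T) (hT' : T ≤ 100) :
    (∀ r : ℝ, 0 < r → ∃ de dh : ℝ,
      HasDerivAt (fun s => lamE ε T s) de r ∧ HasDerivAt (fun s => Heps ε T s) dh r ∧
      0 ≤ dh - de ∧ dh - de ≤ 2 * T * r / ((uu ε T r) ^ 2 * lamE ε T r)) ∧
    AntitoneOn (fun s => lamE ε T s - Heps ε T s) (Set.Ici 0) :=
  stmt9_general ε T hε hε' hT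
end

section
/- For every r ≥ 0 one has H_ε(r)² − λ_i(r)² > 0, and the function R(r) := √((λ_e(r)² − H_ε(r)²)/(H_ε(r)² − λ_i(r)²)) satisfies the explicit formula R(r) = 2√ε / (u(r) + √(u(r)²+4ε)). In particular R(0) = √ε and 0 < R(r) ≤ √ε/(1−ε) for all r ≥ 0. -/
open Real

/-- `R(r) = √((λ_e² − H_ε²)/(H_ε² − λ_i²))`. -/
noncomputable def Rfun (ε T r : ℝ) : ℝ :=
  Real.sqrt (((lamE ε T r) ^ 2 - (Heps ε T r) ^ 2) / ((Heps ε T r) ^ 2 - (lamI ε T r) ^ 2))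

/-!
Writing `a = (1+ε)+(T+ε)r²`, `h = 1+Tr²` and `v = √(u²+4ε)`, one has `2h − a = u`, so
`ε(H_ε² − λ_i²) = (u+v)/2` and `ε(λ_e² − H_ε²) = (v−u)/2`. Hence `R² = (v−u)/(v+u)`, and since
`(v−u)(v+u) = 4ε` this is `(2√ε/(u+v))²`. The bound follows from `v ≥ u ≥ 1−ε`.
-/

lemma sq_inv_sqrt_mul_sqrt {ε x : ℝ} (hε : 0 ≤ ε) (hx : 0 ≤ x) :
    ((√ε)⁻¹ * √x) ^ 2 = x / ε := by
  rw [mul_pow, inv_pow, sq_sqrt hε, sq_sqrt hx, inv_mul_eq_div]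

lemma add_sqrt_sq_add_pos {u c : ℝ} (hc : 0 < c) : 0 < u + √(u ^ 2 + c) := by
  have : |u| < √(u ^ 2 + c) := (lt_sqrt (abs_nonneg u)).2 (by rw [sq_abs]; linarith)
  linarith [neg_abs_le u]

lemma sqrt_sqrt_sq_add_sub_div (u : ℝ) {c : ℝ} (hc : 0 < c) :
    √((√(u ^ 2 + c) - u) / (u + √(u ^ 2 + c))) = √c / (u + √(u ^ 2 + c)) := by
  have hpos := add_sqrt_sq_add_pos (u := u) hc
  have hv : √(u ^ 2 + c) ^ 2 = u ^ 2 + c := sq_sqrt (by positivity)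
  have : (√(u ^ 2 + c) - u) / (u + √(u ^ 2 + c)) = c / (u + √(u ^ 2 + c)) ^ 2 := by
    rw [div_eq_div_iff hpos.ne' (by positivity)]
    linear_combination (u + √(u ^ 2 + c)) * hv
  rw [this, sqrt_div' _ (by positivity), sqrt_sq hpos.le]

section Dispersion

variable {ε T : ℝ} (r : ℝ)

lemma one_sub_le_uu (hT : ε ≤ T) : 1 - ε ≤ uu ε T r := by
  unfold uu
  nlinarith [sq_nonneg r]

lemma sqrt_uu_sq_add_le (hε : 0 ≤ ε) (hT : 0 ≤ T) :
    √(uu ε T r ^ 2 + 4 * ε) ≤ (1 + ε) + (T + ε) * r ^ 2 := by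
  refine sqrt_le_iff.2 ⟨by positivity, ?_⟩
  have : ((1 + ε) + (T + ε) * r ^ 2) ^ 2 - (uu ε T r ^ 2 + 4 * ε)
      = 4 * ε * r ^ 2 * (1 + T + T * r ^ 2) := by
    unfold uu; ring
  nlinarith [show 0 ≤ 4 * ε * r ^ 2 * (1 + T + T * r ^ 2) by positivity]

lemma heps_sq (hε : 0 ≤ ε) (hT : 0 ≤ T) : Heps ε T r ^ 2 = (1 + T * r ^ 2) / ε :=
  sq_inv_sqrt_mul_sqrt hε (by positivity)

lemma lamI_sq (hε : 0 ≤ ε) (hT : 0 ≤ T) :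
    lamI ε T r ^ 2 = ((1 + ε) + (T + ε) * r ^ 2 - √(uu ε T r ^ 2 + 4 * ε)) / 2 / ε :=
  sq_inv_sqrt_mul_sqrt hε (by linarith [sqrt_uu_sq_add_le r hε hT])

lemma lamE_sq (hε : 0 ≤ ε) (hT : 0 ≤ T) :
    lamE ε T r ^ 2 = ((1 + ε) + (T + ε) * r ^ 2 + √(uu ε T r ^ 2 + 4 * ε)) / 2 / ε :=
  sq_inv_sqrt_mul_sqrt hε (by positivity)

lemma heps_sq_sub_lamI_sq (hε : 0 ≤ ε) (hT : 0 ≤ T) :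
    Heps ε T r ^ 2 - lamI ε T r ^ 2 = (uu ε T r + √(uu ε T r ^ 2 + 4 * ε)) / (2 * ε) := by
  rw [heps_sq r hε hT, lamI_sq r hε hT]
  unfold uu
  ring

lemma lamE_sq_sub_heps_sq (hε : 0 ≤ ε) (hT : 0 ≤ T) :
    lamE ε T r ^ 2 - Heps ε T r ^ 2 = (√(uu ε T r ^ 2 + 4 * ε) - uu ε T r) / (2 * ε) := by
  rw [heps_sq r hε hT, lamE_sq r hε hT]
  unfold uu
  ring

lemma heps_sq_sub_lamI_sq_pos (hε : 0 < ε) (hT : 0 ≤ T) :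
    0 < Heps ε T r ^ 2 - lamI ε T r ^ 2 := by
  rw [heps_sq_sub_lamI_sq r hε.le hT]
  exact div_pos (add_sqrt_sq_add_pos (by positivity)) (by positivity)

lemma rfun_eq (hε : 0 < ε) (hT : 0 ≤ T) :
    Rfun ε T r = 2 * √ε / (uu ε T r + √(uu ε T r ^ 2 + 4 * ε)) := by
  have h4ε : √(4 * ε) = 2 * √ε := by
    rw [sqrt_mul' _ hε.le, show (4 : ℝ) = 2 ^ 2 by norm_num, sqrt_sq zero_le_two]
  unfold Rfun
  rw [lamE_sq_sub_heps_sq r hε.le hT, heps_sq_sub_lamI_sq r hε.le hT,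
    div_div_div_cancel_right₀ (by positivity), sqrt_sqrt_sq_add_sub_div _ (by positivity), h4ε]

lemma rfun_pos (hε : 0 < ε) (hT : 0 ≤ T) : 0 < Rfun ε T r := by
  rw [rfun_eq r hε hT]
  exact div_pos (by positivity) (add_sqrt_sq_add_pos (by positivity))

lemma rfun_le (hε : 0 < ε) (hε1 : ε < 1) (hT : ε ≤ T) : Rfun ε T r ≤ √ε / (1 - ε) := by
  have hu := one_sub_le_uu r hT
  have hv : uu ε T r ≤ √(uu ε T r ^ 2 + 4 * ε) :=
    le_sqrt_of_sq_le (by linarith)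
  rw [rfun_eq r hε (by linarith), div_le_div_iff₀ (by linarith) (by linarith)]
  nlinarith [sqrt_nonneg ε]

lemma rfun_zero (hε : 0 < ε) (hT : 0 ≤ T) : Rfun ε T 0 = √ε := by
  have hu : uu ε T 0 = 1 - ε := by unfold uu; ring
  have hv : √((1 - ε) ^ 2 + 4 * ε) = 1 + ε := by
    rw [show (1 - ε) ^ 2 + 4 * ε = (1 + ε) ^ 2 by ring, sqrt_sq (by linarith)]
  rw [rfun_eq 0 hε hT, hu, hv]
  ring

end Dispersion

theorem stmt16_general (ε T : ℝ) (hε : 0 < ε) (hε' : ε ≤ 1 / 1000) (hT : 1 ≤ T) :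
    (∀ r : ℝ, 0 ≤ r →
      0 < (Heps ε T r) ^ 2 - (lamI ε T r) ^ 2 ∧
      Rfun ε T r = 2 * Real.sqrt ε / (uu ε T r + Real.sqrt ((uu ε T r) ^ 2 + 4 * ε)) ∧
      0 < Rfun ε T r ∧ Rfun ε T r ≤ Real.sqrt ε / (1 - ε)) ∧
    Rfun ε T 0 = Real.sqrt ε := by
  have hT₀ : 0 ≤ T := by linarith
  refine ⟨fun r _ => ⟨heps_sq_sub_lamI_sq_pos r hε hT₀, rfun_eq r hε hT₀, rfun_pos r hε hT₀,
    rfun_le r hε (by linarith) (by linarith)⟩, rfun_zero hε hT₀⟩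

/-- For every `r ≥ 0`: `H_ε(r)² − λ_i(r)² > 0` and
`R(r) = 2√ε/(u(r)+√(u(r)²+4ε))`; in particular `R(0) = √ε` and
`0 < R(r) ≤ √ε/(1−ε)`. -/
theorem stmt16 (ε T : ℝ) (hε : 0 < ε) (hε' : ε ≤ 1 / 1000) (hT : 1 ≤ T) (hT' : T ≤ 100) :
    (∀ r : ℝ, 0 ≤ r →
      0 < (Heps ε T r) ^ 2 - (lamI ε T r) ^ 2 ∧
      Rfun ε T r = 2 * Real.sqrt ε / (uu ε T r + Real.sqrt ((uu ε T r) ^ 2 + 4 * ε)) ∧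
      0 < Rfun ε T r ∧ Rfun ε T r ≤ Real.sqrt ε / (1 - ε)) ∧
    Rfun ε T 0 = Real.sqrt ε :=
  stmt16_general ε T hε hε' hT
end
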